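/- Let q be a prime, let (b₁, b₂, b₃, b₄) ∈ (ZMod q)⁴ and h ∈ ZMod q. Then Σ_{r ∈ ZMod q} Σ_{s ∈ ZMod q} Kl(s(r+b₁);q) · Kl(s(r+b₂);q) · conj(Kl(s(r+b₃);q) · Kl(s(r+b₄);q)) · e_q(h·s) = q^(−1) · Σ₁ + S, where Σ₁ = Σ e_q(u⁻¹ + v⁻¹ − u'⁻¹ − v'⁻¹), summed over all quadruples (u,v,u',v') ∈ ((ZMod q)ˣ)⁴ with u + v ≠ u' + v', and S = Σ e_q(u⁻¹ + v⁻¹ − u'⁻¹ − v'⁻¹), summed over all quadruples (u,v,u',v') ∈ ((ZMod q)ˣ)⁴ satisfying both u + v = u' + v' and b₁u + b₂v − b₃u' − b₄v' + h = 0. -/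

import Mathlib

/-!
Expanding the four Kloosterman sums writes the summand at `(r, s)` as
`q⁻² ∑_{u,v,u',v'} e_q(u⁻¹ + v⁻¹ - u'⁻¹ - v'⁻¹) · e_q(s (r (u + v - u' - v') + B))` with
`B = b₁u + b₂v - b₃u' - b₄v' + h`. By orthogonality, `∑_r ∑_s e_q(s (r C + B))` is `q` when
`C ≠ 0` (exactly one `r` makes `r C + B` vanish), `q²` when `C = B = 0`, and `0` otherwise.
-/

open scoped BigOperators

/-- The additive character `e_q(x) = e(x̃/q)` on `ZMod q`. -/
noncomputable def eChar (q : ℕ) (x : ZMod q) : ℂ :=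
  Complex.exp (2 * (Real.pi : ℂ) * Complex.I * (x.val : ℂ) / (q : ℂ))

/-- The normalized Kloosterman sum `Kl(x;q) = q^{-1/2} ∑_{d ∈ (ZMod q)ˣ} e_q(x d + d⁻¹)`. -/
noncomputable def Kl (q : ℕ) [NeZero q] (x : ZMod q) : ℂ :=
  ((Real.sqrt q)⁻¹ : ℝ) *
    ∑ d : (ZMod q)ˣ, eChar q (x * (d : ZMod q) + ((d⁻¹ : (ZMod q)ˣ) : ZMod q))

/-- `ℓ¹`-norm of a (finitely supported) sequence of complex numbers. -/
noncomputable def l1norm {ι : Type*} (f : ι → ℂ) : ℝ := ∑' i, ‖f i‖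

/-- `ℓ²`-norm of a (finitely supported) sequence of complex numbers. -/
noncomputable def l2norm {ι : Type*} (f : ι → ℂ) : ℝ := Real.sqrt (∑' i, ‖f i‖ ^ 2)

open Finset

lemma ofReal_inv_sqrt_pow_four {x : ℝ} (hx : 0 ≤ x) :
    (((Real.sqrt x)⁻¹ : ℝ) : ℂ) ^ 4 = ((x : ℂ) ^ 2)⁻¹ := by
  rw [← Complex.ofReal_pow, inv_pow, show 4 = 2 * 2 from rfl, pow_mul, Real.sq_sqrt hx]
  push_cast; rfl

section Character

variable {q : ℕ} [NeZero q]

lemma eChar_eq_stdAddChar (x : ZMod q) : eChar q x = ZMod.stdAddChar x := by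
  rw [ZMod.stdAddChar_apply, ZMod.toCircle_apply, eChar]

lemma eChar_add (x y : ZMod q) : eChar q (x + y) = eChar q x * eChar q y := by
  simp only [eChar_eq_stdAddChar, AddChar.map_add_eq_mul]

lemma conj_eChar (x : ZMod q) : starRingEnd ℂ (eChar q x) = eChar q (-x) := by
  simp only [eChar_eq_stdAddChar, AddChar.map_neg_eq_conj]

lemma sum_eChar_mul (A : ZMod q) :
    ∑ s : ZMod q, eChar q (s * A) = if A = 0 then (q : ℂ) else 0 := by
  simp only [eChar_eq_stdAddChar, AddChar.sum_mulShift A (ZMod.isPrimitive_stdAddChar q),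
    ZMod.card, Nat.cast_ite, Nat.cast_zero]

lemma Kl_eq (x : ZMod q) :
    Kl q x = ((Real.sqrt q)⁻¹ : ℝ) * ∑ d : (ZMod q)ˣ, eChar q (x * d + (d : ZMod q)⁻¹) := by
  simp only [Kl, ZMod.inv_coe_unit]

lemma conj_Kl (x : ZMod q) :
    starRingEnd ℂ (Kl q x) =
      ((Real.sqrt q)⁻¹ : ℝ) * ∑ d : (ZMod q)ˣ, eChar q (-(x * d + (d : ZMod q)⁻¹)) := by
  simp only [Kl_eq, map_mul, map_sum, conj_eChar, Complex.conj_ofReal]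

lemma Kl_mul_Kl_mul_conj (x y z w : ZMod q) :
    Kl q x * Kl q y * starRingEnd ℂ (Kl q z * Kl q w) =
      ((q : ℂ) ^ 2)⁻¹ * ∑ u : (ZMod q)ˣ, ∑ v : (ZMod q)ˣ, ∑ u' : (ZMod q)ˣ, ∑ v' : (ZMod q)ˣ,
        eChar q (x * u + y * v - z * u' - w * v' +
          ((u : ZMod q)⁻¹ + (v : ZMod q)⁻¹ - (u' : ZMod q)⁻¹ - (v' : ZMod q)⁻¹)) := by
  rw [map_mul, conj_Kl, conj_Kl, Kl_eq, Kl_eq, ← Complex.ofReal_natCast,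
    ← ofReal_inv_sqrt_pow_four q.cast_nonneg,
    show ∀ c A B C D : ℂ, c * A * (c * B) * (c * C * (c * D)) = c ^ 4 * (A * B * (C * D)) by
      intros; ring]
  congr 1
  simp only [sum_mul_sum, ← eChar_add]
  refine sum_congr rfl fun u _ ↦ ?_
  rw [sum_comm]
  refine sum_congr rfl fun v _ ↦ sum_congr rfl fun u' _ ↦ sum_congr rfl fun v' _ ↦
    congrArg _ (by ring)

end Character

lemma sum_sum_comm_sum₄ {α β γ M : Type*} [Fintype α] [Fintype β] [Fintype γ] [AddCommMonoid M]
    (f : α → β → γ → γ → γ → γ → M) :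
    ∑ a, ∑ b, ∑ u, ∑ v, ∑ u', ∑ v', f a b u v u' v' =
      ∑ u, ∑ v, ∑ u', ∑ v', ∑ a, ∑ b, f a b u v u' v' := by
  simp only [← Fintype.sum_prod_type' (f := fun a b ↦ f a b _ _ _ _)]
  rw [← Fintype.sum_prod_type']
  rw [sum_comm]; refine sum_congr rfl fun u _ ↦ ?_
  rw [sum_comm]; refine sum_congr rfl fun v _ ↦ ?_
  rw [sum_comm]; refine sum_congr rfl fun u' _ ↦ ?_
  rw [sum_comm]

section Prime

variable {q : ℕ} [Fact q.Prime]

lemma sum_sum_eChar_mul_affine (C B : ZMod q) :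
    ∑ r : ZMod q, ∑ s : ZMod q, eChar q (s * (r * C + B)) =
      if C = 0 then (if B = 0 then (q : ℂ) ^ 2 else 0) else q := by
  simp only [sum_eChar_mul]
  by_cases hC : C = 0
  · by_cases hB : B = 0 <;> simp [hC, hB, ZMod.card, sq]
  · have hroot (r : ZMod q) : r * C + B = 0 ↔ r = -B / C := by
      rw [eq_div_iff hC, add_eq_zero_iff_eq_neg]
    simp only [hroot, sum_ite_eq', mem_univ, if_true, hC, if_false]

lemma sum_sum_inv_sq_mul_eChar (a : ℂ) (P P' B : ZMod q) :
    ∑ r : ZMod q, ∑ s : ZMod q, ((q : ℂ) ^ 2)⁻¹ * (a * eChar q (s * (r * (P - P') + B))) =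
      (q : ℂ)⁻¹ * (if P ≠ P' then a else 0) + (if P = P' ∧ B = 0 then a else 0) := by
  have hq : (q : ℂ) ≠ 0 := Nat.cast_ne_zero.mpr (Fact.out : q.Prime).ne_zero
  simp only [← mul_sum, sum_sum_eChar_mul_affine]
  by_cases hP : P = P'
  · by_cases hB : B = 0
    · simp only [hP, hB, sub_self, mul_zero, if_true, ne_eq, not_true_eq_false, if_false, and_self,
        zero_add]
      field_simp
    · simp [hP, hB]
  · simp only [sub_eq_zero, hP, ↓reduceIte, ne_eq, not_false_eq_true, false_and, add_zero]
    field_simp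

end Prime

/-- Decomposition of the complete sum `Σ(K,b,h)` of products of four Kloosterman sums into the
contribution `q⁻¹ Σ₁` of quadruples with `u+v ≠ u'+v'` and the two-variable character sum `S`
over quadruples with `u+v = u'+v'` and `b₁u + b₂v - b₃u' - b₄v' + h = 0`. -/
theorem complete_sum_splits (q : ℕ) [Fact (Nat.Prime q)] (b₁ b₂ b₃ b₄ h : ZMod q) :
    (∑ r : ZMod q, ∑ s : ZMod q,
        Kl q (s * (r + b₁)) * Kl q (s * (r + b₂)) *
          (starRingEnd ℂ) (Kl q (s * (r + b₃)) * Kl q (s * (r + b₄))) *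
          eChar q (h * s)) =
      (q : ℂ)⁻¹ *
        (∑ u : (ZMod q)ˣ, ∑ v : (ZMod q)ˣ, ∑ u' : (ZMod q)ˣ, ∑ v' : (ZMod q)ˣ,
          if (u : ZMod q) + (v : ZMod q) ≠ (u' : ZMod q) + (v' : ZMod q) then
            eChar q ((u : ZMod q)⁻¹ + (v : ZMod q)⁻¹ - (u' : ZMod q)⁻¹ - (v' : ZMod q)⁻¹)
          else 0) +
      (∑ u : (ZMod q)ˣ, ∑ v : (ZMod q)ˣ, ∑ u' : (ZMod q)ˣ, ∑ v' : (ZMod q)ˣ,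
          if (u : ZMod q) + (v : ZMod q) = (u' : ZMod q) + (v' : ZMod q) ∧
              b₁ * (u : ZMod q) + b₂ * (v : ZMod q) - b₃ * (u' : ZMod q) - b₄ * (v' : ZMod q)
                + h = 0 then
            eChar q ((u : ZMod q)⁻¹ + (v : ZMod q)⁻¹ - (u' : ZMod q)⁻¹ - (v' : ZMod q)⁻¹)
          else 0) := by
  have expand (r s : ZMod q) :
      Kl q (s * (r + b₁)) * Kl q (s * (r + b₂)) *
          (starRingEnd ℂ) (Kl q (s * (r + b₃)) * Kl q (s * (r + b₄))) * eChar q (h * s) =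
        ∑ u : (ZMod q)ˣ, ∑ v : (ZMod q)ˣ, ∑ u' : (ZMod q)ˣ, ∑ v' : (ZMod q)ˣ, ((q : ℂ) ^ 2)⁻¹ *
          (eChar q ((u : ZMod q)⁻¹ + (v : ZMod q)⁻¹ - (u' : ZMod q)⁻¹ - (v' : ZMod q)⁻¹) *
            eChar q (s * (r * ((u + v : ZMod q) - (u' + v' : ZMod q)) +
              (b₁ * u + b₂ * v - b₃ * u' - b₄ * v' + h)))) := by
    rw [Kl_mul_Kl_mul_conj, mul_assoc]
    simp only [sum_mul, mul_sum, ← eChar_add]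
    refine sum_congr rfl fun u _ ↦ sum_congr rfl fun v _ ↦ sum_congr rfl fun u' _ ↦
      sum_congr rfl fun v' _ ↦ congrArg _ (congrArg _ (by ring))
  simp only [expand]
  rw [sum_sum_comm_sum₄]
  simp only [sum_sum_inv_sq_mul_eChar, sum_add_distrib, mul_sum]
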